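/- Let P and N be smooth matrix-valued maps on ℝⁿ such that P(x) is skew-symmetric and N(x)P(x) is skew-symmetric for every x, and suppose the Magri–Morosi concomitant C(P,N) vanishes identically. Then for every index l and every point: Σ_j ∂_j ( (N P)^{jl} ) − Σ_i N^l_i Σ_j ∂_j P^{ji} = −(1/2) Σ_j P^{lj} ∂_j (Tr N). That is, the first modular vector field X^{(1)} = X¹_μ − N X⁰_μ (computed with Lebesgue measure, where X^k_μ has components Σ_j ∂_j (N^k P)^{jl}) equals −(1/2) H^P_{Tr N}. -/

import Mathlib

open Matrix BigOperators

/-- Partial derivative in the `l`-th coordinate direction. -/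
noncomputable def pd {n : ℕ} (l : Fin n) (f : (Fin n → ℝ) → ℝ) (x : Fin n → ℝ) : ℝ :=
  fderiv ℝ f x (Pi.single l 1)

/-- The Magri–Morosi concomitant `C(P,N)^{kj}_m` in coordinates. -/
noncomputable def MagriMorosi {n : ℕ}
    (P N : (Fin n → ℝ) → Matrix (Fin n) (Fin n) ℝ)
    (k j m : Fin n) (x : Fin n → ℝ) : ℝ :=
  ∑ l, (P x l j * pd l (fun y => N y k m) x
      + P x k l * pd l (fun y => N y j m) x
      - N x l m * pd l (fun y => P y k j) x
      + N x j l * pd m (fun y => P y k l) x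
      - P x l j * pd m (fun y => N y k l) x)

lemma pd_sum {n : ℕ} (l : Fin n) (f : Fin n → (Fin n → ℝ) → ℝ) (x : Fin n → ℝ)
    (hf : ∀ i, DifferentiableAt ℝ (f i) x) :
    pd l (fun y => ∑ i, f i y) x = ∑ i, pd l (f i) x := by
  unfold pd
  rw [fderiv_fun_sum fun i _ => hf i]
  simp

lemma pd_mul {n : ℕ} (l : Fin n) (f g : (Fin n → ℝ) → ℝ) (x : Fin n → ℝ)
    (hf : DifferentiableAt ℝ f x) (hg : DifferentiableAt ℝ g x) :
    pd l (fun y => f y * g y) x = f x * pd l g x + g x * pd l f x := by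
  unfold pd
  rw [fderiv_fun_mul hf hg]
  simp

lemma pd_neg {n : ℕ} (l : Fin n) (f : (Fin n → ℝ) → ℝ) (x : Fin n → ℝ) :
    pd l (fun y => -(f y)) x = - pd l f x := by
  unfold pd
  rw [fderiv_fun_neg]
  simp

lemma key_algebra {n : ℕ} (Pv Nv : Fin n → Fin n → ℝ)
    (dP dN : Fin n → Fin n → Fin n → ℝ) (l : Fin n)
    (sP : ∀ i j, Pv i j = - Pv j i)
    (E1 : ∑ k, ∑ a, (Pv a l * dN a k k + Pv k a * dN a l k - Nv a k * dP a k l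
        + Nv l a * dP k k a - Pv a l * dN k k a) = 0)
    (E2 : ∑ j, ∑ a, (Pv a j * dN a l j + Pv l a * dN a j j - Nv a j * dP a l j
        + Nv j a * dP j l a - Pv a j * dN j l a) = 0) :
    ∑ j, ∑ m, (Nv j m * dP j m l + Pv m l * dN j j m) - ∑ i, Nv l i * ∑ j, dP j j i
      = -(1 / 2 : ℝ) * ∑ j, Pv l j * ∑ m, dN j m m := by
  set S : ℝ := ∑ j, Pv l j * ∑ m, dN j m m with hS
  -- second contraction
  have split2 : ∑ j, ∑ a, (Pv a j * dN a l j + Pv l a * dN a j j - Nv a j * dP a l j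
        + Nv j a * dP j l a - Pv a j * dN j l a)
      = (∑ j, ∑ a, Pv a j * dN a l j) + (∑ j, ∑ a, Pv l a * dN a j j)
        - (∑ j, ∑ a, Nv a j * dP a l j) + (∑ j, ∑ a, Nv j a * dP j l a)
        - (∑ j, ∑ a, Pv a j * dN j l a) := by
    simp only [Finset.sum_add_distrib, Finset.sum_sub_distrib]
  have h2 : ∑ j, ∑ a, Pv l a * dN a j j = S := by
    rw [Finset.sum_comm, hS]
    exact Finset.sum_congr rfl fun a _ => (Finset.mul_sum _ _ _).symm
  have h34 : ∑ j, ∑ a, Nv j a * dP j l a = ∑ j, ∑ a, Nv a j * dP a l j := Finset.sum_comm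
  have h5 : ∑ j, ∑ a, Pv a j * dN j l a = ∑ j, ∑ a, -(Pv a j * dN a l j) := by
    rw [Finset.sum_comm]
    refine Finset.sum_congr rfl fun j _ => Finset.sum_congr rfl fun a _ => ?_
    rw [sP j a]; ring
  have hneg : ∑ j, ∑ a, -(Pv a j * dN a l j) = - ∑ j, ∑ a, Pv a j * dN a l j := by
    simp
  rw [split2, h2, h34, h5, hneg] at E2
  have star2 : ∑ j, ∑ a, Pv a j * dN a l j = -(1 / 2 : ℝ) * S := by linarith
  -- first contraction
  have split1 : ∑ k, ∑ a, (Pv a l * dN a k k + Pv k a * dN a l k - Nv a k * dP a k l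
        + Nv l a * dP k k a - Pv a l * dN k k a)
      = (∑ k, ∑ a, Pv a l * dN a k k) + (∑ k, ∑ a, Pv k a * dN a l k)
        - (∑ k, ∑ a, Nv a k * dP a k l) + (∑ k, ∑ a, Nv l a * dP k k a)
        - (∑ k, ∑ a, Pv a l * dN k k a) := by
    simp only [Finset.sum_add_distrib, Finset.sum_sub_distrib]
  have t1 : ∑ k, ∑ a, Pv a l * dN a k k = -S := by
    rw [Finset.sum_comm, hS]
    rw [show (∑ a, ∑ k, Pv a l * dN a k k) = ∑ a, -(Pv l a * ∑ k, dN a k k) from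
      Finset.sum_congr rfl fun a _ => by rw [← Finset.mul_sum, sP a l]; ring]
    simp
  have t2 : ∑ k, ∑ a, Pv k a * dN a l k = (1 / 2 : ℝ) * S := by
    have h : ∑ k, ∑ a, Pv k a * dN a l k = ∑ j, ∑ a, -(Pv a j * dN a l j) := by
      refine Finset.sum_congr rfl fun k _ => Finset.sum_congr rfl fun a _ => ?_
      rw [sP k a]; ring
    rw [h, hneg, star2]; ring
  have t3 : ∑ k, ∑ a, Nv a k * dP a k l = ∑ j, ∑ m, Nv j m * dP j m l := Finset.sum_comm
  have t4 : ∑ k, ∑ a, Nv l a * dP k k a = ∑ i, Nv l i * ∑ j, dP j j i := by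
    rw [Finset.sum_comm]
    exact Finset.sum_congr rfl fun a _ => (Finset.mul_sum _ _ _).symm
  rw [split1, t1, t2, t3, t4] at E1
  have gsplit : ∑ j, ∑ m, (Nv j m * dP j m l + Pv m l * dN j j m)
      = (∑ j, ∑ m, Nv j m * dP j m l) + ∑ j, ∑ m, Pv m l * dN j j m := by
    simp only [Finset.sum_add_distrib]
  rw [gsplit]
  linarith

theorem first_modular_vector_field
    {n : ℕ} (hn : 1 ≤ n)
    (P N : (Fin n → ℝ) → Matrix (Fin n) (Fin n) ℝ)
    (hP : ∀ i j : Fin n, ContDiff ℝ (⊤ : ℕ∞) (fun x => P x i j))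
    (hN : ∀ i j : Fin n, ContDiff ℝ (⊤ : ℕ∞) (fun x => N x i j))
    (hskewP : ∀ x, (P x)ᵀ = -(P x))
    (hskewNP : ∀ x, (N x * P x)ᵀ = -(N x * P x))
    (hC : ∀ (k j m : Fin n) (x : Fin n → ℝ), MagriMorosi P N k j m x = 0) :
    ∀ (l : Fin n) (x : Fin n → ℝ),
      ∑ j, pd j (fun y => ∑ m, N y j m * P y m l) x
        - ∑ i, N x l i * ∑ j, pd j (fun y => P y j i) x
        = -(1 / 2 : ℝ) * ∑ j, P x l j * pd j (fun y => ∑ m, N y m m) x := by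
  intro l x
  have hPd : ∀ (i j : Fin n) (y : Fin n → ℝ), DifferentiableAt ℝ (fun z => P z i j) y :=
    fun i j y => ((hP i j).differentiable (by simp)).differentiableAt
  have hNd : ∀ (i j : Fin n) (y : Fin n → ℝ), DifferentiableAt ℝ (fun z => N z i j) y :=
    fun i j y => ((hN i j).differentiable (by simp)).differentiableAt
  have sP : ∀ i j : Fin n, P x i j = - P x j i := by
    intro i j
    have h : (P x)ᵀ j i = (-(P x)) j i := by rw [hskewP x]
    simpa using h
  have hgoalL : ∀ j : Fin n, pd j (fun y => ∑ m, N y j m * P y m l) x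
      = ∑ m, (N x j m * pd j (fun y => P y m l) x + P x m l * pd j (fun y => N y j m) x) := by
    intro j
    rw [pd_sum j (fun m y => N y j m * P y m l) x (fun m => (hNd j m x).mul (hPd m l x))]
    exact Finset.sum_congr rfl fun m _ => pd_mul j _ _ x (hNd j m x) (hPd m l x)
  have hgoalR : ∀ j : Fin n, pd j (fun y => ∑ m, N y m m) x
      = ∑ m, pd j (fun y => N y m m) x :=
    fun j => pd_sum j (fun m y => N y m m) x (fun m => hNd m m x)
  simp only [hgoalL, hgoalR]
  have E1 : ∑ k : Fin n, MagriMorosi P N k l k x = 0 :=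
    Finset.sum_eq_zero fun k _ => hC k l k x
  have E2 : ∑ j : Fin n, MagriMorosi P N l j j x = 0 :=
    Finset.sum_eq_zero fun j _ => hC l j j x
  simp only [MagriMorosi] at E1 E2
  exact key_algebra (fun i j => P x i j) (fun i j => N x i j)
    (fun k i j => pd k (fun y => P y i j) x) (fun k i j => pd k (fun y => N y i j) x)
    l sP E1 E2
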